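/- arXiv:2408.15478 — 2 statements merged into one kernel-verified Lean document; each statement's English description precedes it below -/
import Mathlib

section
/- Every element h of the subgroup H of J₃ generated by s₁₂ and s₂₃ can be written in exactly one of the forms h = (s₁₂·s₂₃)ⁿ or h = (s₁₂·s₂₃)ⁿ·s₁₂ for a unique integer n, and these two families of elements are disjoint. -/
/-
Since `s₁₂` and `s₂₃` are involutions, conjugation by `s₁₂` inverts `t = s₁₂ s₂₃`, so every word in
them collapses to `tⁿ` or `tⁿ s₁₂`. These words are pairwise distinct because `J₃` maps to the
infinite dihedral group by `s₁₂ ↦ sr 0`, `s₂₃ ↦ sr 2`, `s₁₃ ↦ sr 1`, which sends `tⁿ` to the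
rotation `r (2n)` and `tⁿ s₁₂` to the reflection `sr (-2n)`.
-/

/-- Generators of the cactus group `J₃`. -/
inductive CactusGen : Type
  | s12 | s23 | s13
  deriving DecidableEq

open FreeGroup in
/-- Relators of the cactus group `J₃`:
`s₁₂² = s₂₃² = s₁₃² = 1`, `s₁₂·s₁₃ = s₁₃·s₂₃`, `s₂₃·s₁₃ = s₁₃·s₁₂`. -/
def cactusRels : Set (FreeGroup CactusGen) :=
  { of .s12 * of .s12,
    of .s23 * of .s23,
    of .s13 * of .s13,
    of .s12 * of .s13 * (of .s13 * of .s23)⁻¹,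
    of .s23 * of .s13 * (of .s13 * of .s12)⁻¹ }

/-- The cactus group `J₃` as a presented group. -/
abbrev J3 : Type := PresentedGroup cactusRels

def s12 : J3 := PresentedGroup.of .s12
def s23 : J3 := PresentedGroup.of .s23
def s13 : J3 := PresentedGroup.of .s13

/-- The subgroup `H = J₃^{2}` of `J₃` generated by `s₁₂` and `s₂₃`. -/
def H : Subgroup J3 := Subgroup.closure {s12, s23}

section Involutions

variable {G : Type*} [Group G] {a b : G}

lemma mul_zpow_mul_eq_zpow_neg_mul (ha : a * a = 1) (hb : b * b = 1) (n : ℤ) :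
    a * (a * b) ^ n = (a * b) ^ (-n) * a := by
  have hsemiconj : SemiconjBy a (a * b) (b * a) := by
    rw [SemiconjBy, ← mul_assoc, ha, one_mul, mul_assoc, ha, mul_one]
  have hinv : b * a = (a * b)⁻¹ :=
    eq_inv_of_mul_eq_one_right (by rw [mul_assoc, ← mul_assoc b, hb, one_mul, ha])
  rw [(hsemiconj.zpow_right n).eq, hinv, inv_zpow, zpow_neg]

lemma exists_eq_zpow_mul_of_mem_closure_pair (ha : a * a = 1) (hb : b * b = 1) {g : G}
    (hg : g ∈ Subgroup.closure {a, b}) : ∃ p : ℤ × Bool, g = (a * b) ^ p.1 * cond p.2 a 1 := by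
  have mul_left_a (n : ℤ) (e : Bool) :
      a * ((a * b) ^ n * cond e a 1) = (a * b) ^ (-n) * cond (!e) a 1 := by
    rw [← mul_assoc, mul_zpow_mul_eq_zpow_neg_mul ha hb, mul_assoc]
    cases e <;> simp [ha]
  have mul_left_b (n : ℤ) (e : Bool) :
      b * ((a * b) ^ n * cond e a 1) = (a * b) ^ (-1 + -n) * cond (!e) a 1 := by
    have hb_eq : b = (a * b) ^ (-1 : ℤ) * a := by
      rw [zpow_neg_one, mul_inv_rev, inv_mul_cancel_right, inv_eq_of_mul_eq_one_right hb]
    nth_rw 1 [hb_eq]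
    rw [mul_assoc, mul_left_a, ← mul_assoc, ← zpow_add]
  have inv_self (x : G) (hx : x ∈ ({a, b} : Set G)) : x⁻¹ = x := by
    obtain rfl | rfl := hx
    exacts [inv_eq_of_mul_eq_one_right ha, inv_eq_of_mul_eq_one_right hb]
  have mul_left (x : G) (hx : x ∈ ({a, b} : Set G)) (n : ℤ) (e : Bool) :
      ∃ q : ℤ × Bool, x * ((a * b) ^ n * cond e a 1) = (a * b) ^ q.1 * cond q.2 a 1 := by
    obtain rfl | rfl := hx
    exacts [⟨(-n, !e), mul_left_a n e⟩, ⟨(-1 + -n, !e), mul_left_b n e⟩]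
  induction hg using Subgroup.closure_induction_left with
  | one => exact ⟨(0, false), by simp⟩
  | mul_left x hx y _ ih =>
    obtain ⟨⟨n, e⟩, rfl⟩ := ih
    exact mul_left x hx n e
  | inv_mul_cancel x hx y _ ih =>
    obtain ⟨⟨n, e⟩, rfl⟩ := ih
    rw [inv_self x hx]
    exact mul_left x hx n e

end Involutions

lemma s12_mul_self : s12 * s12 = 1 :=
  PresentedGroup.one_of_mem (by simp [cactusRels])

lemma s23_mul_self : s23 * s23 = 1 :=
  PresentedGroup.one_of_mem (by simp [cactusRels])

open DihedralGroup

-- Conjugation by the reflection `sr 1` swaps the reflections `sr 0` and `sr 2`, as the last two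
-- relations of `J₃` demand.
def cactusGenToDihedral : CactusGen → DihedralGroup 0
  | .s12 => sr 0
  | .s23 => sr 2
  | .s13 => sr 1

lemma lift_cactusGenToDihedral_rel :
    ∀ r ∈ cactusRels, FreeGroup.lift cactusGenToDihedral r = 1 := by
  simp only [cactusRels, Set.mem_insert_iff, Set.mem_singleton_iff]
  rintro r (rfl | rfl | rfl | rfl | rfl) <;>
    simp only [map_mul, map_inv, FreeGroup.lift_apply_of, cactusGenToDihedral, sr_mul_sr, inv_r,
      r_mul_r] <;> decide

def cactusToDihedral : J3 →* DihedralGroup 0 := PresentedGroup.toGroup lift_cactusGenToDihedral_rel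

-- `ZMod 0` is `ℤ` by definition; the indices are elaborated in `ℤ` so that `r.inj` and `sr.inj`
-- produce integer equations.
lemma cactusToDihedral_zpow_mul (n : ℤ) (e : Bool) :
    cactusToDihedral ((s12 * s23) ^ n * cond e s12 1) =
      cond e (sr (-(2 * n) : ℤ)) (r (2 * n : ℤ)) := by
  have hs12 : cactusToDihedral s12 = sr 0 := PresentedGroup.toGroup.of _
  have hs23 : cactusToDihedral s23 = sr 2 := PresentedGroup.toGroup.of _
  cases e <;>
    simp only [cond_false, cond_true, mul_one, map_mul, map_zpow, hs12, hs23, sr_mul_sr, sub_zero,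
      zero_sub, r_zpow, r_mul_sr] <;> rfl

lemma cactusToDihedral_zpow_mul_injective :
    Function.Injective fun p : ℤ × Bool ↦
      cactusToDihedral ((s12 * s23) ^ p.1 * cond p.2 s12 1) := by
  rintro ⟨n, e⟩ ⟨m, f⟩ h
  simp only [cactusToDihedral_zpow_mul] at h
  cases e <;> cases f <;> simp only [cond_false, cond_true, reduceCtorEq] at h
  · have : 2 * n = 2 * m := r.inj h
    exact Prod.ext (by omega) rfl
  · have : -(2 * n) = -(2 * m) := sr.inj h
    exact Prod.ext (by omega) rfl

/-- every element of `H` is of exactly one of the forms `(s₁₂·s₂₃)ⁿ` or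
`(s₁₂·s₂₃)ⁿ·s₁₂` for a unique integer `n`, and the two families are disjoint. -/
theorem H_normal_form :
    ∀ h : J3, h ∈ H → ∃! p : ℤ × Bool, h = (s12 * s23) ^ p.1 * (cond p.2 s12 1) := by
  intro h hh
  obtain ⟨p, rfl⟩ := exists_eq_zpow_mul_of_mem_closure_pair s12_mul_self s23_mul_self hh
  exact ⟨p, rfl, fun q hq ↦ cactusToDihedral_zpow_mul_injective (congrArg cactusToDihedral hq.symm)⟩
end

section
/- The element s₁₃ does not belong to the subgroup H of J₃ generated by s₁₂ and s₂₃, and H has index 2 in J₃; equivalently, for every element x of J₃, either x ∈ H or x·s₁₃ ∈ H, but not both. -/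
namespace Subgroup

theorem index_eq_orderOf_of_sup_zpowers_eq_top {G : Type*} [Group G] {N : Subgroup G} [N.Normal]
    {g : G} (h : N ⊔ zpowers g = ⊤) : N.index = orderOf (g : G ⧸ N) := by
  have hzpowers : zpowers (g : G ⧸ N) = ⊤ :=
    calc zpowers (g : G ⧸ N) = (N ⊔ zpowers g).map (QuotientGroup.mk' N) := by
          rw [map_sup, QuotientGroup.map_mk'_self, MonoidHom.map_zpowers, bot_sup_eq]; rfl
      _ = ⊤ := by rw [h, ← MonoidHom.range_eq_map, QuotientGroup.range_mk']
  rw [index_eq_card, ← Nat.card_zpowers, hzpowers, card_top]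

end Subgroup

theorem rel_eq_one {r : FreeGroup CactusGen} (h : r ∈ cactusRels) :
    (QuotientGroup.mk r : J3) = 1 :=
  (QuotientGroup.eq_one_iff r).mpr (Subgroup.subset_normalClosure h)

theorem s13_mul_s13 : s13 * s13 = 1 :=
  rel_eq_one (by simp [cactusRels])

theorem s12_mul_s13 : s12 * s13 = s13 * s23 :=
  mul_inv_eq_one.mp (rel_eq_one (by simp [cactusRels]))

theorem s23_mul_s13 : s23 * s13 = s13 * s12 :=
  mul_inv_eq_one.mp (rel_eq_one (by simp [cactusRels]))

theorem s13_inv : s13⁻¹ = s13 :=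
  inv_eq_of_mul_eq_one_right s13_mul_s13

theorem conj_s13_s12 : MulAut.conj s13 s12 = s23 := by
  rw [MulAut.conj_apply, s13_inv, mul_assoc, s12_mul_s13, ← mul_assoc, s13_mul_s13, one_mul]

theorem conj_s13_s23 : MulAut.conj s13 s23 = s12 := by
  rw [MulAut.conj_apply, s13_inv, mul_assoc, s23_mul_s13, ← mul_assoc, s13_mul_s13, one_mul]

instance H_normal : H.Normal := by
  rw [← Subgroup.normalizer_eq_top_iff, eq_top_iff, ← PresentedGroup.closure_range_of,
    Subgroup.closure_le]
  rintro _ ⟨_ | _ | _, rfl⟩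
  · exact Subgroup.le_normalizer (Subgroup.subset_closure (by simp [s12]))
  · exact Subgroup.le_normalizer (Subgroup.subset_closure (by simp [s23]))
  · change s13 ∈ Subgroup.normalizer H
    rw [Subgroup.mem_normalizer_iff_map_conj_eq, H, MonoidHom.map_closure, Set.image_pair]
    simp only [MonoidHom.coe_coe, conj_s13_s12, conj_s13_s23]
    rw [Set.pair_comm]

theorem H_sup_zpowers_s13 : H ⊔ Subgroup.zpowers s13 = ⊤ := by
  rw [eq_top_iff, ← PresentedGroup.closure_range_of, Subgroup.closure_le]
  rintro _ ⟨_ | _ | _, rfl⟩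
  · exact le_sup_left (b := Subgroup.zpowers s13) (Subgroup.subset_closure (by simp [s12]))
  · exact le_sup_left (b := Subgroup.zpowers s13) (Subgroup.subset_closure (by simp [s23]))
  · exact le_sup_right (a := H) (Subgroup.mem_zpowers s13)

def s13Parity : J3 →* Multiplicative (ZMod 2) :=
  PresentedGroup.toGroup (f := fun | .s13 => .ofAdd 1 | _ => 1) (by
    rintro r (rfl | rfl | rfl | rfl | rfl) <;> decide)

theorem H_le_ker_s13Parity : H ≤ s13Parity.ker := by
  rw [H, Subgroup.closure_le]
  rintro _ (rfl | rfl) <;> exact PresentedGroup.toGroup.of _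

theorem s13Parity_s13 : s13Parity s13 ≠ 1 := by
  rw [s13, s13Parity, PresentedGroup.toGroup.of]
  decide

/-- `s₁₃ ∉ H`, and `H` has index 2 in `J₃`; equivalently, for every `x ∈ J₃`,
either `x ∈ H` or `x·s₁₃ ∈ H`, but not both. -/
theorem s13_not_mem_H_and_index_two :
    s13 ∉ H ∧ H.index = 2 ∧ ∀ x : J3, Xor' (x ∈ H) (x * s13 ∈ H) := by
  have hs13 : s13 ∉ H := fun h => s13Parity_s13 (H_le_ker_s13Parity h)
  have hindex : H.index = 2 := by
    rw [Subgroup.index_eq_orderOf_of_sup_zpowers_eq_top H_sup_zpowers_s13]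
    refine orderOf_eq_prime ?_ (by rwa [Ne, QuotientGroup.eq_one_iff])
    rw [sq, ← QuotientGroup.mk_mul, s13_mul_s13, QuotientGroup.mk_one]
  refine ⟨hs13, hindex, fun x => ?_⟩
  rw [Subgroup.mul_mem_iff_of_index_two hindex, iff_false_intro hs13]
  tauto
end
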